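/- Let a batch contain p pushes with values v₀, …, v_{p−1} and q pops, and suppose the eliminated pairs are linearized as adjacent push-then-pop pairs followed by the |p−q| non-eliminated operations applied atomically. Then the net effect on any stack s is: if p ≥ q, the final stack is reverse([v_q, …, v_{p−1}]) ++ s; if q > p, the final stack is List.drop (q − p) s. In both cases this equals the effect of some sequential interleaving of the p pushes and q pops on s. -/
import Mathlib


/-- Stack semantics of a single operation: `some x` is a push of `x`,
`none` is a pop. -/
def stackStep {α : Type*} (st : List α) (op : Option α) : List α :=
  match op with
  | some x => x :: st
  | none => st.tail

/-- The linearization of a frozen batch with `p` pushes (values `v 0`,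
…, `v (p-1)`) and `q` pops: first the `min p q` eliminated pairs as
adjacent push-then-pop pairs, then the `|p - q|` non-eliminated
operations in increasing sequence number. -/
def batchOps {α : Type*} (p q : ℕ) (v : ℕ → α) : List (Option α) :=
  (List.range (min p q)).flatMap (fun i => [some (v i), none]) ++
    (if q ≤ p then (List.range' q (p - q)).map (fun i => some (v i))
     else List.replicate (q - p) (none : Option α))

lemma foldl_pairs {α : Type*} (v : ℕ → α) (n : ℕ) (s : List α) :
    ((List.range n).flatMap (fun i => [some (v i), none])).foldl stackStep s = s := by
  induction n with
  | zero => simp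
  | succ n ih => simp [List.range_succ, List.foldl_append, ih, stackStep]

lemma foldl_pushes {α : Type*} (l : List α) (s : List α) :
    (l.map some).foldl stackStep s = l.reverse ++ s := by
  induction l generalizing s with
  | nil => simp
  | cons a t ih => simp [stackStep, ih]

lemma foldl_pops {α : Type*} (k : ℕ) (s : List α) :
    (List.replicate k (none : Option α)).foldl stackStep s = s.drop k := by
  induction k generalizing s with
  | zero => simp
  | succ k ih =>
    simp [List.replicate_succ, stackStep, ih, List.drop_drop, List.tail_drop]

/-- Net effect of a frozen batch on any stack `s`: if `p ≥ q` the final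
stack is `reverse [v_q, …, v_{p-1}] ++ s`; if `q > p` it is
`List.drop (q - p) s`; and in both cases this is the effect of the
sequential interleaving `batchOps` (eliminated pairs first, then the
remaining operations). -/
theorem batch_net_effect {α : Type*} (p q : ℕ) (v : ℕ → α) (s : List α) :
    (batchOps p q v).foldl stackStep s =
      (if q ≤ p then ((List.range' q (p - q)).map v).reverse ++ s
       else List.drop (q - p) s) := by
  unfold batchOps
  rw [List.foldl_append, foldl_pairs]
  split
  · rw [show (fun i => some (v i)) = some ∘ v from rfl, ← List.map_map, foldl_pushes]
  · rw [foldl_pops]
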